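/- For quaternions ν, μ ∈ ℍ₊, the kernel k(ν,μ) = (|μ|² + 2Re(μ)ν + ν²)⁻¹(ν + μ) satisfies the Sylvester-type equation ν·k(ν,μ) + k(ν,μ)·conj(μ) = 1. -/

import Mathlib

open Quaternion

/-- The slice hyperholomorphic kernel of the Hardy space of the half-space. -/
noncomputable def kQ (p q : Quaternion ℝ) : Quaternion ℝ :=
  ((‖q‖ ^ 2 : ℝ) + (2 * q.re : ℝ) * p + p ^ 2)⁻¹ * (p + q)

/-!
The denominator `d = |μ|² + 2 Re(μ) ν + ν²` is a real polynomial in `ν`, so it commutes with `ν`,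
and `ν (ν + μ) + (ν + μ) μ̄ = d` because `μ + μ̄ = 2 Re μ` and `μ μ̄ = |μ|²` are real. Hence
`ν k + k μ̄ = d⁻¹ d = 1` as soon as `d ≠ 0`. The imaginary part of `d` is `2 (Re ν + Re μ) Im ν`,
so `d = 0` would force `ν` to be real and then `d = (ν + Re μ)² + |Im μ|² = 0`, i.e. `Re ν = -Re μ`.
-/

namespace Quaternion

noncomputable def kQDenom (p q : ℍ[ℝ]) : ℍ[ℝ] := (‖q‖ ^ 2 : ℝ) + (2 * q.re : ℝ) * p + p ^ 2

lemma kQ_eq_inv_kQDenom_mul (p q : ℍ[ℝ]) : kQ p q = (kQDenom p q)⁻¹ * (p + q) := rfl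

lemma kQDenom_commute (p q : ℍ[ℝ]) : Commute (kQDenom p q) p :=
  ((coe_commute _ p).add_left ((coe_commute _ p).mul_left (Commute.refl p))).add_left
    ((Commute.refl p).pow_left 2)

lemma kQDenom_ne_zero {p q : ℍ[ℝ]} (h : p.re + q.re ≠ 0) : kQDenom p q ≠ 0 := by
  intro hd
  have hre := congrArg QuaternionAlgebra.re hd
  have hI := congrArg QuaternionAlgebra.imI hd
  have hJ := congrArg QuaternionAlgebra.imJ hd
  have hK := congrArg QuaternionAlgebra.imK hd
  simp only [kQDenom, pow_two, re_add, re_mul, imI_add, imI_mul, imJ_add, imJ_mul, imK_add,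
    imK_mul, re_coe, imI_coe, imJ_coe, imK_coe, re_zero, imI_zero, imJ_zero, imK_zero]
    at hre hI hJ hK
  have eq_zero_of_mul {x : ℝ} (hx : (p.re + q.re) * x = 0) : x = 0 :=
    (mul_eq_zero.mp hx).resolve_left h
  have hI0 := eq_zero_of_mul (x := p.imI) (by linear_combination hI / 2)
  have hJ0 := eq_zero_of_mul (x := p.imJ) (by linear_combination hJ / 2)
  have hK0 := eq_zero_of_mul (x := p.imK) (by linear_combination hK / 2)
  have hq : ‖q‖ * ‖q‖ = q.re ^ 2 + q.imI ^ 2 + q.imJ ^ 2 + q.imK ^ 2 := by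
    rw [← normSq_eq_norm_mul_self, normSq_def']
  rw [hI0, hJ0, hK0, hq] at hre
  refine h (pow_eq_zero_iff two_ne_zero |>.mp ?_)
  nlinarith [sq_nonneg q.imI, sq_nonneg q.imJ, sq_nonneg q.imK, sq_nonneg (p.re + q.re)]

lemma mul_add_add_add_mul_star_eq_kQDenom (p q : ℍ[ℝ]) :
    p * (p + q) + (p + q) * star q = kQDenom p q := by
  have h_add : q + star q = ((2 * q.re : ℝ) : ℍ[ℝ]) := self_add_star' q
  have h_mul : q * star q = ((‖q‖ ^ 2 : ℝ) : ℍ[ℝ]) := by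
    rw [self_mul_star, sq, normSq_eq_norm_mul_self]
  calc p * (p + q) + (p + q) * star q = p * p + p * (q + star q) + q * star q := by noncomm_ring
    _ = kQDenom p q := by rw [h_add, h_mul, ← (coe_commute _ p).eq, kQDenom]; noncomm_ring

end Quaternion

/-- Sylvester-type equation `ν k(ν,μ) + k(ν,μ) conj(μ) = 1` for `ν, μ ∈ ℍ₊`. -/
theorem quaternionic_sylvester (ν μ : Quaternion ℝ) (hν : 0 < ν.re) (hμ : 0 < μ.re) :
    ν * kQ ν μ + kQ ν μ * star μ = 1 := by
  have hd : kQDenom ν μ ≠ 0 := kQDenom_ne_zero (by linarith)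
  have hcomm : ν * (kQDenom ν μ)⁻¹ = (kQDenom ν μ)⁻¹ * ν :=
    (kQDenom_commute ν μ).inv_left₀.eq.symm
  calc ν * kQ ν μ + kQ ν μ * star μ
      = (kQDenom ν μ)⁻¹ * (ν * (ν + μ) + (ν + μ) * star μ) := by
        rw [kQ_eq_inv_kQDenom_mul, ← mul_assoc, hcomm, mul_assoc, mul_assoc, ← mul_add]
    _ = 1 := by rw [mul_add_add_add_mul_star_eq_kQDenom, inv_mul_cancel₀ hd]
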